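/- arXiv:1803.09444 — 2 statements merged into one kernel-verified Lean document; each statement's English description precedes it below -/
import Mathlib

section
/- (Novikov condition for the structure preserving measure change.) Let α > 0, δ > 0 and β, β* ∈ (−π, π), and set h(z) := ((β* − β)/α) · z. Then the function z ↦ (1 − e^{h(z)} + h(z) e^{h(z)}) · δ e^{β z/α} / (z · sinh(π z/α)) is Lebesgue-integrable on ℝ \ {0}, i.e. ∫_{ℝ\{0}} [1 − e^{h(z)} + h(z) e^{h(z)}] k(z) dz < ∞ where k is the Meixner Lévy density with parameters (α, β, δ). -/
open MeasureTheory Real Set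

/-- The Meixner Lévy density with scaling parameter `α`, skewness parameter `β` and
peakedness parameter `δ`. -/
noncomputable def meixnerLevyDensity (α β δ : ℝ) (z : ℝ) : ℝ :=
  δ * Real.exp (β * z / α) / (z * Real.sinh (Real.pi * z / α))

/-!
The Esscher tilt preserves the Meixner family, `e^{h(z)} k_β(z) = k_{β*}(z)`, so the integrand is
`k_β - k_{β*} + ((β* - β)/α) z k_{β*}`. For `|z| ≥ 1` each term is integrable because
`z k_β(z) = δ e^{βz/α} / sinh(πz/α)` decays like `e^{-(π ∓ β)|z|/α}`. For `|z| ≤ 1` the density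
is `O(1/z²)` while `0 ≤ 1 - e^t + t e^t ≤ t² e^{|t|}`, so the integrand is bounded there.
-/

lemma one_sub_exp_add_mul_exp_nonneg (t : ℝ) : 0 ≤ 1 - exp t + t * exp t := by
  nlinarith [add_one_le_exp (-t), exp_pos t, exp_neg t, mul_inv_cancel₀ (exp_pos t).ne']

lemma one_sub_exp_add_mul_exp_le_sq_mul_exp_abs (t : ℝ) :
    1 - exp t + t * exp t ≤ t ^ 2 * exp |t| := by
  have hle : 1 - exp t + t * exp t ≤ t * (exp t - 1) := by nlinarith [add_one_le_exp t]
  refine hle.trans ?_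
  rcases le_or_gt 0 t with ht | ht
  · have h := mul_le_mul_of_nonneg_left (add_one_le_exp (-t)) (exp_pos t).le
    rw [← exp_add, add_neg_cancel, exp_zero] at h
    rw [abs_of_nonneg ht]
    nlinarith
  · rw [abs_of_neg ht]
    nlinarith [add_one_le_exp t, one_le_exp (neg_nonneg.2 ht.le)]

lemma mul_sq_le_mul_sinh_mul {k : ℝ} (hk : 0 ≤ k) (z : ℝ) : k * z ^ 2 ≤ z * sinh (k * z) := by
  rcases le_total 0 z with hz | hz
  · nlinarith [self_le_sinh_iff.2 (mul_nonneg hk hz)]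
  · nlinarith [sinh_le_self_iff.2 (mul_nonpos_of_nonneg_of_nonpos hk hz)]

lemma mul_exp_le_sinh {x₀ x : ℝ} (hx : x₀ ≤ x) :
    (1 - exp (-(2 * x₀))) / 2 * exp x ≤ sinh x := by
  have hexp : exp (-x) = exp x * exp (-(2 * x)) := by rw [← exp_add]; ring_nf
  have hmono : exp (-(2 * x)) ≤ exp (-(2 * x₀)) := exp_le_exp.2 (by linarith)
  rw [sinh_eq, hexp]
  nlinarith [exp_pos x]

lemma integrableOn_Iic_neg_iff {E : Type*} [NormedAddCommGroup E] {f : ℝ → E} {a : ℝ} :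
    IntegrableOn f (Iic (-a)) ↔ IntegrableOn (fun x => f (-x)) (Ici a) := by
  have hpre : Neg.neg ⁻¹' Iic (-a) = Ici a := by ext; simp
  rw [← (Measure.measurePreserving_neg volume).integrableOn_comp_preimage
    (Homeomorph.neg ℝ).measurableEmbedding, hpre]
  rfl

lemma integrableOn_exp_mul_div_sinh_mul_Ici {a b r : ℝ} (hb : 0 < b) (hr : 0 < r) (hab : a < b) :
    IntegrableOn (fun x => exp (a * x) / sinh (b * x)) (Ici r) := by
  set m := (1 - exp (-(2 * (b * r)))) / 2
  have hm : 0 < m := by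
    have : exp (-(2 * (b * r))) < 1 := exp_lt_one_iff.2 (by nlinarith)
    simp only [m]; linarith
  have hdom : IntegrableOn (fun x => m⁻¹ * exp (-(b - a) * x)) (Ici r) :=
    ((integrableOn_Ici_iff_integrableOn_Ioi).2
      (exp_neg_integrableOn_Ioi r (sub_pos.2 hab))).const_mul _
  refine hdom.mono' (by fun_prop : Measurable _).aestronglyMeasurable
    ((ae_restrict_iff' measurableSet_Ici).2 (Filter.Eventually.of_forall fun x hx => ?_))
  have hsinh : m * exp (b * x) ≤ sinh (b * x) := mul_exp_le_sinh (by nlinarith [mem_Ici.1 hx])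
  have hpos : 0 < m * exp (b * x) := by positivity
  rw [norm_div, norm_of_nonneg (exp_pos _).le, norm_of_nonneg (hpos.le.trans hsinh)]
  calc exp (a * x) / sinh (b * x) ≤ exp (a * x) / (m * exp (b * x)) :=
        div_le_div_of_nonneg_left (exp_pos _).le hpos hsinh
    _ = m⁻¹ * exp (-(b - a) * x) := by
        rw [show -(b - a) * x = a * x - b * x by ring, exp_sub]; field_simp

@[fun_prop]
lemma measurable_meixnerLevyDensity (α β δ : ℝ) : Measurable (meixnerLevyDensity α β δ) := by
  unfold meixnerLevyDensity
  fun_prop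

lemma meixnerLevyDensity_neg (α β δ z : ℝ) :
    meixnerLevyDensity α β δ (-z) = meixnerLevyDensity α (-β) δ z := by
  simp only [meixnerLevyDensity, mul_neg, neg_div, sinh_neg, neg_mul, neg_neg]

lemma exp_mul_meixnerLevyDensity {α : ℝ} (hα : α ≠ 0) (β βs δ z : ℝ) :
    exp ((βs - β) / α * z) * meixnerLevyDensity α β δ z = meixnerLevyDensity α βs δ z := by
  simp only [meixnerLevyDensity, mul_div_assoc', ← mul_assoc, mul_comm (exp _) δ, mul_assoc δ,
    ← exp_add]
  congr 3
  field_simp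
  ring

lemma mul_meixnerLevyDensity (α β δ : ℝ) {z : ℝ} (hz : z ≠ 0) :
    z * meixnerLevyDensity α β δ z = δ * exp (β / α * z) / sinh (π / α * z) := by
  rw [meixnerLevyDensity, mul_div_right_comm β, mul_div_right_comm π]
  field_simp

lemma abs_meixnerLevyDensity_le {α : ℝ} (hα : 0 < α) (β δ : ℝ) {z : ℝ} (hz : z ≠ 0) :
    |meixnerLevyDensity α β δ z| ≤ |δ| * exp (β * z / α) / (π / α * z ^ 2) := by
  have hsq : π / α * z ^ 2 ≤ z * sinh (π * z / α) := by
    rw [mul_div_right_comm π]; exact mul_sq_le_mul_sinh_mul (by positivity) z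
  have hpos : 0 < π / α * z ^ 2 := by positivity
  rw [meixnerLevyDensity, abs_div, abs_mul, abs_of_pos (exp_pos _),
    abs_of_pos (hpos.trans_le hsq)]
  exact div_le_div_of_nonneg_left (by positivity) hpos hsq

lemma integrableOn_one_sub_exp_add_mul_exp_mul_meixnerLevyDensity_Icc {α : ℝ} (hα : 0 < α)
    (β δ c : ℝ) :
    IntegrableOn (fun z => (1 - exp (c * z) + c * z * exp (c * z)) * meixnerLevyDensity α β δ z)
      (Icc (-1) 1) := by
  set M := |δ| * exp (|β| / α) / (π / α)
  refine Measure.integrableOn_of_bounded (M := c ^ 2 * exp |c| * M) measure_Icc_lt_top.ne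
    (by fun_prop : Measurable _).aestronglyMeasurable
    ((ae_restrict_iff' measurableSet_Icc).2 (Filter.Eventually.of_forall fun z hz => ?_))
  have hz1 : |z| ≤ 1 := abs_le.2 hz
  rcases eq_or_ne z 0 with rfl | hz0
  · simp only [meixnerLevyDensity, mul_zero, zero_mul, div_zero, norm_zero]
    positivity
  have hweight : 1 - exp (c * z) + c * z * exp (c * z) ≤ c ^ 2 * exp |c| * z ^ 2 := calc
    _ ≤ (c * z) ^ 2 * exp |c * z| := one_sub_exp_add_mul_exp_le_sq_mul_exp_abs _
    _ ≤ (c * z) ^ 2 * exp |c| := by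
      refine mul_le_mul_of_nonneg_left (exp_le_exp.2 ?_) (sq_nonneg _)
      rw [abs_mul]
      exact mul_le_of_le_one_right (abs_nonneg _) hz1
    _ = _ := by ring
  have hdens : |meixnerLevyDensity α β δ z| ≤ M / z ^ 2 := calc
    _ ≤ |δ| * exp (β * z / α) / (π / α * z ^ 2) := abs_meixnerLevyDensity_le hα β δ hz0
    _ ≤ |δ| * exp (|β| / α) / (π / α * z ^ 2) := by
      gcongr
      calc β * z ≤ |β * z| := le_abs_self _
        _ ≤ |β| := by rw [abs_mul]; exact mul_le_of_le_one_right (abs_nonneg _) hz1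
    _ = M / z ^ 2 := by ring
  rw [norm_mul, norm_of_nonneg (one_sub_exp_add_mul_exp_nonneg _), Real.norm_eq_abs]
  calc _ ≤ (c ^ 2 * exp |c| * z ^ 2) * (M / z ^ 2) :=
        mul_le_mul hweight hdens (abs_nonneg _) (by positivity)
    _ = c ^ 2 * exp |c| * M := by field_simp

lemma integrableOn_mul_meixnerLevyDensity_Ici {α β : ℝ} (hα : 0 < α) (hβ : β < π) (δ : ℝ) :
    IntegrableOn (fun z => z * meixnerLevyDensity α β δ z) (Ici 1) := by
  refine IntegrableOn.congr_fun ((integrableOn_exp_mul_div_sinh_mul_Ici (div_pos pi_pos hα)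
    one_pos (div_lt_div_of_pos_right hβ hα)).const_mul δ) (fun z hz => ?_) measurableSet_Ici
  rw [mul_meixnerLevyDensity α β δ (one_pos.trans_le hz).ne', mul_div_assoc]

lemma integrableOn_meixnerLevyDensity_Ici {α β : ℝ} (hα : 0 < α) (hβ : β < π) (δ : ℝ) :
    IntegrableOn (meixnerLevyDensity α β δ) (Ici 1) := by
  refine Integrable.mono (integrableOn_mul_meixnerLevyDensity_Ici hα hβ δ)
    (measurable_meixnerLevyDensity α β δ).aestronglyMeasurable
    ((ae_restrict_iff' measurableSet_Ici).2 (Filter.Eventually.of_forall fun z hz => ?_))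
  rw [norm_mul]
  exact le_mul_of_one_le_left (norm_nonneg _) (hz.trans (le_abs_self z))

lemma integrableOn_meixnerLevyDensity_Iic_union_Ici {α β : ℝ} (hα : 0 < α)
    (hβ : β ∈ Ioo (-π) π) (δ : ℝ) :
    IntegrableOn (meixnerLevyDensity α β δ) (Iic (-1) ∪ Ici 1) := by
  refine .union (integrableOn_Iic_neg_iff.2 ?_) (integrableOn_meixnerLevyDensity_Ici hα hβ.2 δ)
  simp_rw [meixnerLevyDensity_neg]
  exact integrableOn_meixnerLevyDensity_Ici hα (by linarith [hβ.1]) δ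

lemma integrableOn_mul_meixnerLevyDensity_Iic_union_Ici {α β : ℝ} (hα : 0 < α)
    (hβ : β ∈ Ioo (-π) π) (δ : ℝ) :
    IntegrableOn (fun z => z * meixnerLevyDensity α β δ z) (Iic (-1) ∪ Ici 1) := by
  refine .union (integrableOn_Iic_neg_iff.2 ?_) (integrableOn_mul_meixnerLevyDensity_Ici hα hβ.2 δ)
  simp_rw [meixnerLevyDensity_neg, neg_mul]
  exact (integrableOn_mul_meixnerLevyDensity_Ici hα (by linarith [hβ.1]) δ).neg

theorem meixner_novikov_condition_general (α β βs δ : ℝ) (hα : 0 < α)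
    (hβ : β ∈ Set.Ioo (-Real.pi) Real.pi) (hβs : βs ∈ Set.Ioo (-Real.pi) Real.pi)
    (h : ℝ → ℝ) (hh : ∀ z, h z = (βs - β) / α * z) :
    IntegrableOn
      (fun z : ℝ => (1 - Real.exp (h z) + h z * Real.exp (h z)) * meixnerLevyDensity α β δ z)
      {0}ᶜ := by
  simp only [hh]
  set c := (βs - β) / α
  have hmiddle := integrableOn_one_sub_exp_add_mul_exp_mul_meixnerLevyDensity_Icc hα β δ c
  have htails : IntegrableOn (fun z => (1 - exp (c * z) + c * z * exp (c * z)) *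
      meixnerLevyDensity α β δ z) (Iic (-1) ∪ Ici 1) := by
    have hsplit : (fun z => (1 - exp (c * z) + c * z * exp (c * z)) * meixnerLevyDensity α β δ z)
        = fun z => meixnerLevyDensity α β δ z - meixnerLevyDensity α βs δ z +
          c * (z * meixnerLevyDensity α βs δ z) := by
      funext z
      rw [← exp_mul_meixnerLevyDensity hα.ne' β βs δ z]
      ring
    rw [hsplit]
    exact ((integrableOn_meixnerLevyDensity_Iic_union_Ici hα hβ δ).sub
      (integrableOn_meixnerLevyDensity_Iic_union_Ici hα hβs δ)).add
      ((integrableOn_mul_meixnerLevyDensity_Iic_union_Ici hα hβs δ).const_mul c)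
  refine (hmiddle.union htails).mono_set fun z _ => ?_
  simp only [mem_union, mem_Icc, mem_Iic, mem_Ici]
  grind

/-- Novikov condition for the structure preserving measure change with Radon–Nikodym
exponent `h(z) = ((β* − β)/α) z`. -/
theorem meixner_novikov_condition (α β βs δ : ℝ) (hα : 0 < α)
    (hβ : β ∈ Set.Ioo (-Real.pi) Real.pi) (hβs : βs ∈ Set.Ioo (-Real.pi) Real.pi)
    (hδ : 0 < δ) (h : ℝ → ℝ) (hh : ∀ z, h z = (βs - β) / α * z) :
    IntegrableOn
      (fun z : ℝ => (1 - Real.exp (h z) + h z * Real.exp (h z)) * meixnerLevyDensity α β δ z)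
      {0}ᶜ :=
  meixner_novikov_condition_general α β βs δ hα hβ hβs h hh
end

section
/- (Proposition 4.5: characteristic function of the capped period return via the log-return density.) Let α > 0, β ∈ (−π, π), d > 0, m ∈ ℝ, and let Y be a real random variable with Meixner density f(·; α, β, d, m). Let c ≥ 0, g ∈ ℝ, n ≥ 1 and set Z := min(c, e^{Y} − 1) − g/n. Then for every x ∈ ℝ, E[e^{i x Z}] = e^{−i x g/n} · ( e^{i x c} + ∫_{−∞}^{ln(1+c)} [ e^{i x (e^{u} − 1)} − e^{i x c} ] · f(u; α, β, d, m) du ). -/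
/-!
Write `e(r) = exp(i x r)`. Since `e^u - 1 ≤ c` exactly when `u ≤ log (1 + c)`, the function
`u ↦ e(min c (e^u - 1))` is the constant `e(c)` plus the indicator of `Iic (log (1 + c))` applied
to `u ↦ e(e^u - 1) - e(c)`. Integrating against the law of `Y`, a probability measure, the constant
contributes `e(c)` and the bounded correction is integrated against the Meixner density; the shift
by `-g/n` only contributes the factor `e(-g/n)`.
-/

open MeasureTheory Real Set

/-- The Meixner probability density with scaling parameter `α`, skewness parameter `β`,
peakedness parameter `d` and location parameter `m`. -/
noncomputable def meixnerDensity (α β d m : ℝ) (x : ℝ) : ℝ :=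
  (2 * Real.cos (β / 2)) ^ (2 * d) / (2 * Real.pi * α * Real.Gamma (2 * d)) *
    Real.exp (β * (x - m) / α) *
    ‖Complex.Gamma ((d : ℂ) + Complex.I * (((x - m) / α : ℝ) : ℂ))‖ ^ 2

lemma Complex.differentiableAt_Gamma_of_re_pos {s : ℂ} (hs : 0 < s.re) :
    DifferentiableAt ℂ Complex.Gamma s := by
  refine Complex.differentiableAt_Gamma s fun k hk => ?_
  have : (-(k : ℂ)).re ≤ 0 := by simp
  rw [← hk] at this
  linarith

lemma continuous_meixnerDensity (α β m : ℝ) {d : ℝ} (hd : 0 < d) :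
    Continuous (meixnerDensity α β d m) := by
  have hGamma : Continuous fun u : ℝ =>
      Complex.Gamma ((d : ℂ) + Complex.I * (((u - m) / α : ℝ) : ℂ)) :=
    continuous_iff_continuousAt.2 fun u =>
      (Complex.differentiableAt_Gamma_of_re_pos (by simpa using hd)).continuousAt.comp
        (by fun_prop)
  unfold meixnerDensity
  fun_prop

lemma meixnerDensity_nonneg {α β d : ℝ} (hα : 0 < α) (hβ : β ∈ Ioo (-π) π) (hd : 0 < d)
    (m x : ℝ) : 0 ≤ meixnerDensity α β d m x := by
  have hcos : 0 < Real.cos (β / 2) :=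
    Real.cos_pos_of_mem_Ioo ⟨by linarith [hβ.1], by linarith [hβ.2]⟩
  have hGamma : 0 < Real.Gamma (2 * d) := Real.Gamma_pos_of_pos (by linarith)
  unfold meixnerDensity
  have := Real.pi_pos
  positivity

lemma norm_cexp_I_mul_ofReal_mul_ofReal (x r : ℝ) :
    ‖Complex.exp (Complex.I * (x : ℂ) * (r : ℂ))‖ = 1 := by
  rw [mul_assoc, ← Complex.ofReal_mul, Complex.norm_exp_I_mul_ofReal]

lemma apply_min_exp_sub_one {E : Type*} [AddCommGroup E] (F : ℝ → E) {c : ℝ} (hc : -1 < c)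
    (u : ℝ) :
    F (min c (Real.exp u - 1)) =
      F c + (Iic (Real.log (1 + c))).indicator (fun u => F (Real.exp u - 1) - F c) u := by
  by_cases hu : u ≤ Real.log (1 + c)
  · have hexp : Real.exp u - 1 ≤ c := by
      linarith [(Real.le_log_iff_exp_le (by linarith)).1 hu]
    rw [min_eq_right hexp, indicator_of_mem (mem_Iic.2 hu), add_sub_cancel]
  · have hexp : c ≤ Real.exp u - 1 := by
      linarith [(Real.le_log_iff_exp_le (by linarith)).not.1 hu]
    rw [min_eq_left hexp, indicator_of_notMem (by simpa using hu), add_zero]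

section Integrals

variable {X E : Type*} [MeasurableSpace X] [NormedAddCommGroup E] [NormedSpace ℝ E]

lemma integral_const_add_indicator [CompleteSpace E] {ν : Measure X} [IsProbabilityMeasure ν]
    (a : E) {s : Set X} (hs : MeasurableSet s) {g : X → E} (hg : IntegrableOn g s ν) :
    ∫ x, (a + s.indicator g x) ∂ν = a + ∫ x in s, g x ∂ν := by
  rw [integral_add (integrable_const a) ((integrable_indicator_iff hs).2 hg), integral_const,
    integral_indicator hs, probReal_univ, one_smul]

lemma setIntegral_withDensity_ofReal {μ : Measure X} {f : X → ℝ} {s : Set X}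
    (hs : MeasurableSet s) (hf : AEMeasurable f (μ.restrict s))
    (hf0 : ∀ᵐ x ∂μ.restrict s, 0 ≤ f x) (g : X → E) :
    ∫ x in s, g x ∂μ.withDensity (fun x => ENNReal.ofReal (f x)) =
      ∫ x in s, f x • g x ∂μ := by
  rw [setIntegral_withDensity_eq_setIntegral_toReal_smul₀ hf.ennreal_ofReal
    (ae_of_all _ fun _ => ENNReal.ofReal_lt_top) g hs]
  refine integral_congr_ae ?_
  filter_upwards [hf0] with x hx
  rw [ENNReal.toReal_ofReal hx]

end Integrals

theorem charFun_capped_return_via_log_density_general (α β d m : ℝ) (hα : 0 < α)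
    (hβ : β ∈ Set.Ioo (-Real.pi) Real.pi) (hd : 0 < d)
    {Ω : Type*} [MeasurableSpace Ω] (μ : Measure Ω) [IsProbabilityMeasure μ]
    (Y : Ω → ℝ) (hY : Measurable Y)
    (hdens : μ.map Y = volume.withDensity (fun x => ENNReal.ofReal (meixnerDensity α β d m x)))
    (c g : ℝ) (hc : 0 ≤ c) (n : ℕ)
    (Z : Ω → ℝ) (hZ : ∀ ω, Z ω = min c (Real.exp (Y ω) - 1) - g / n) (x : ℝ) :
    (∫ ω, Complex.exp (Complex.I * (x : ℂ) * (Z ω : ℂ)) ∂μ)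
      = Complex.exp (-(Complex.I * (x : ℂ) * ((g / n : ℝ) : ℂ))) *
          (Complex.exp (Complex.I * (x : ℂ) * (c : ℂ))
            + ∫ u in Set.Iic (Real.log (1 + c)),
                (Complex.exp (Complex.I * (x : ℂ) * ((Real.exp u - 1 : ℝ) : ℂ))
                    - Complex.exp (Complex.I * (x : ℂ) * (c : ℂ))) *
                  ((meixnerDensity α β d m u : ℝ) : ℂ)) := by
  set e : ℝ → ℂ := fun r => Complex.exp (Complex.I * (x : ℂ) * (r : ℂ)) with he
  have he_cont : Continuous e := by fun_prop
  have : IsProbabilityMeasure (μ.map Y) := Measure.isProbabilityMeasure_map hY.aemeasurable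
  have hZ_shift : ∀ ω, Complex.exp (Complex.I * (x : ℂ) * (Z ω : ℂ)) =
      e (-(g / n)) * e (min c (Real.exp (Y ω) - 1)) := by
    intro ω
    simp only [he, hZ ω, ← Complex.exp_add]
    push_cast
    ring_nf
  have hcorr : IntegrableOn (fun u => e (Real.exp u - 1) - e c) (Iic (Real.log (1 + c)))
      (μ.map Y) := by
    refine (Integrable.of_bound (by fun_prop) 2 (ae_of_all _ fun u => ?_)).integrableOn
    refine (norm_sub_le _ _).trans ?_
    simp only [he, norm_cexp_I_mul_ofReal_mul_ofReal]
    norm_num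
  calc (∫ ω, Complex.exp (Complex.I * (x : ℂ) * (Z ω : ℂ)) ∂μ)
      = e (-(g / n)) * ∫ y, e (min c (Real.exp y - 1)) ∂(μ.map Y) := by
        rw [integral_map hY.aemeasurable (by fun_prop), ← integral_const_mul]
        simp only [hZ_shift]
    _ = e (-(g / n)) *
          (e c + ∫ u in Iic (Real.log (1 + c)), (e (Real.exp u - 1) - e c) ∂(μ.map Y)) := by
        simp only [apply_min_exp_sub_one e (by linarith : (-1 : ℝ) < c)]
        rw [integral_const_add_indicator _ measurableSet_Iic hcorr]
    _ = _ := by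
        rw [hdens, setIntegral_withDensity_ofReal measurableSet_Iic
          (continuous_meixnerDensity α β m hd).aemeasurable
          (ae_of_all _ (meixnerDensity_nonneg hα hβ hd m))]
        simp only [he, Complex.real_smul, Complex.ofReal_neg, mul_neg]
        congr 2
        exact integral_congr_ae (ae_of_all _ fun u => mul_comm _ _)

/-- Proposition 4.5: characteristic function of the capped period return
`Z = min(c, e^Y - 1) - g/n` via the Meixner log-return density. -/
theorem charFun_capped_return_via_log_density (α β d m : ℝ) (hα : 0 < α)
    (hβ : β ∈ Set.Ioo (-Real.pi) Real.pi) (hd : 0 < d)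
    {Ω : Type*} [MeasurableSpace Ω] (μ : Measure Ω) [IsProbabilityMeasure μ]
    (Y : Ω → ℝ) (hY : Measurable Y)
    (hdens : μ.map Y = volume.withDensity (fun x => ENNReal.ofReal (meixnerDensity α β d m x)))
    (c g : ℝ) (hc : 0 ≤ c) (n : ℕ) (hn : 1 ≤ n)
    (Z : Ω → ℝ) (hZ : ∀ ω, Z ω = min c (Real.exp (Y ω) - 1) - g / n) (x : ℝ) :
    (∫ ω, Complex.exp (Complex.I * (x : ℂ) * (Z ω : ℂ)) ∂μ)
      = Complex.exp (-(Complex.I * (x : ℂ) * ((g / n : ℝ) : ℂ))) *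
          (Complex.exp (Complex.I * (x : ℂ) * (c : ℂ))
            + ∫ u in Set.Iic (Real.log (1 + c)),
                (Complex.exp (Complex.I * (x : ℂ) * ((Real.exp u - 1 : ℝ) : ℂ))
                    - Complex.exp (Complex.I * (x : ℂ) * (c : ℂ))) *
                  ((meixnerDensity α β d m u : ℝ) : ℂ)) :=
  charFun_capped_return_via_log_density_general α β d m hα hβ hd μ Y hY hdens c g hc n Z hZ x
end
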